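/- Let B_n be the set of non-constant monotone Boolean functions f : P({1,…,n}) → {0,1}, let X_1,…,X_n and Y be finite-valued random variables, and suppose I_∂ : B_n → ℝ satisfies the PID consistency equations: for every a ⊆ {1,…,n}, I(X^a ; Y) = Σ_{f ∈ B_n, f(a)=1} I_∂(f). Define f† by f†(s) = 1 ⟺ f(sᶜ) = 0. Then for any two disjoint subsets a, b ⊆ {1,…,n}: Σ_{f ∈ B_n, f(a∪b)=1 and f(b)=0} I_∂(f†) = I(X^a ; Y | X^{(a∪b)ᶜ}), where (a∪b)ᶜ = {1,…,n}∖(a∪b). In other words, the PID conjugation of the conditional mutual information I(X^a;Y|X^b) coincides with its entropic conjugate. -/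
import Mathlib


open MeasureTheory Finset

noncomputable section

variable {Ω : Type*} [MeasurableSpace Ω]

/-- Shannon entropy of a finite-valued random variable `Z` under the measure `μ`
(with the convention that the entropy of an empty tuple is `negMulLog (μ univ) = 0`
for a probability measure). -/
def ent {α : Type*} [Fintype α] (μ : Measure Ω) (Z : Ω → α) : ℝ :=
  ∑ z : α, Real.negMulLog ((μ (Z ⁻¹' {z})).toReal)

/-- Conditional entropy `H(A | B)`. -/
def condEnt {α β : Type*} [Fintype α] [Fintype β] (μ : Measure Ω)
    (A : Ω → α) (B : Ω → β) : ℝ :=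
  ent μ (fun ω => (A ω, B ω)) - ent μ B

/-- Mutual information `I(A ; B)`. -/
def mi {α β : Type*} [Fintype α] [Fintype β] (μ : Measure Ω)
    (A : Ω → α) (B : Ω → β) : ℝ :=
  ent μ A + ent μ B - ent μ (fun ω => (A ω, B ω))

/-- Conditional mutual information `I(A ; B | C)`. -/
def cmi {α β γ : Type*} [Fintype α] [Fintype β] [Fintype γ] (μ : Measure Ω)
    (A : Ω → α) (B : Ω → β) (C : Ω → γ) : ℝ :=
  ent μ (fun ω => (A ω, C ω)) + ent μ (fun ω => (B ω, C ω))
    - ent μ (fun ω => (A ω, B ω, C ω)) - ent μ C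

/-- The sub-tuple `X^a = (X_i)_{i ∈ a}` of the random vector `X = (X_1, …, X_n)`. -/
def restr {n : ℕ} {S : Type*} (X : Fin n → Ω → S) (a : Finset (Fin n)) :
    Ω → (a → S) :=
  fun ω i => X i.1 ω

/-- Average subset entropy `r_k(X) = C(n,k)⁻¹ ∑_{|a| = k} H(X^a)`. -/
def rE {n : ℕ} {S : Type*} [Fintype S] (μ : Measure Ω) (X : Fin n → Ω → S) (k : ℕ) : ℝ :=
  ((n.choose k : ℝ))⁻¹ *
    ∑ a ∈ univ.powerset.filter (fun a : Finset (Fin n) => a.card = k), ent μ (restr X a)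

/-- Average conditional pairwise mutual information
`u_k(X) = (C(n,k+1) C(k+1,2))⁻¹ ∑_{i<j} ∑_{|a| = k-1, i,j ∉ a} I(X_i ; X_j | X^a)`. -/
def uI {n : ℕ} {S : Type*} [Fintype S] (μ : Measure Ω) (X : Fin n → Ω → S) (k : ℕ) : ℝ :=
  ((n.choose (k + 1) : ℝ) * ((k + 1).choose 2 : ℝ))⁻¹ *
    ∑ p ∈ univ.filter (fun p : Fin n × Fin n => p.1 < p.2),
      ∑ a ∈ (univ \ ({p.1, p.2} : Finset (Fin n))).powerset.filter
          (fun a : Finset (Fin n) => a.card = k - 1),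
        cmi μ (X p.1) (X p.2) (restr X a)

/-- A Boolean function on the powerset of `{1,…,n}` is monotone if `a ⊆ b` implies
`f a ≤ f b` (with `false < true`). -/
def monoBF {n : ℕ} (f : Finset (Fin n) → Bool) : Prop :=
  ∀ a b : Finset (Fin n), a ⊆ b → f a ≤ f b

instance {n : ℕ} (f : Finset (Fin n) → Bool) : Decidable (monoBF f) := by
  unfold monoBF; infer_instance

/-- The conjugate Boolean function `f†`, defined by `f†(s) = 1 ⟺ f(sᶜ) = 0`. -/
def conjBF {n : ℕ} (f : Finset (Fin n) → Bool) : Finset (Fin n) → Bool :=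
  fun s => !(f sᶜ)

lemma ent_comp_inj {α β : Type*} [Fintype α] [Fintype β]
    (μ : Measure Ω) (W : Ω → α) (e : α → β) (he : Function.Injective e) :
    ent μ (fun ω => e (W ω)) = ent μ W := by
  classical
  unfold ent
  rw [← Finset.sum_subset (Finset.subset_univ (Finset.univ.image e))]
  · rw [Finset.sum_image (fun x _ y _ h => he h)]
    refine Finset.sum_congr rfl fun w _ => ?_
    have : (fun ω => e (W ω)) ⁻¹' {e w} = W ⁻¹' {w} := by
      ext ω; simp [he.eq_iff]
    rw [this]
  · intro z _ hz
    have : (fun ω => e (W ω)) ⁻¹' {z} = ∅ := by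
      ext ω; simp only [Set.mem_preimage, Set.mem_singleton_iff, Set.mem_empty_iff_false,
        iff_false]
      intro h
      exact hz (Finset.mem_image.2 ⟨W ω, Finset.mem_univ _, h⟩)
    simp [this]

lemma conj_conj {n : ℕ} (f : Finset (Fin n) → Bool) : conjBF (conjBF f) = f := by
  funext s; simp [conjBF]

lemma mono_conj {n : ℕ} {f : Finset (Fin n) → Bool} (hf : monoBF f) : monoBF (conjBF f) := by
  intro s t hst
  have h1 : tᶜ ⊆ sᶜ := Finset.compl_subset_compl.2 hst
  have := hf _ _ h1
  simp only [conjBF]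
  revert this
  cases f sᶜ <;> cases f tᶜ <;> simp

def glue {n : ℕ} {S : Type*} (a c d : Finset (Fin n))
    (h : ∀ i ∈ d, i ∉ a → i ∈ c) (p : (a → S) × (c → S)) : d → S :=
  fun i => if h' : i.1 ∈ a then p.1 ⟨i.1, h'⟩ else p.2 ⟨i.1, h i.1 i.2 h'⟩

lemma glue_inj {n : ℕ} {S : Type*} (a c d : Finset (Fin n))
    (h : ∀ i ∈ d, i ∉ a → i ∈ c) (had : a ⊆ d) (hcd : c ⊆ d) (hac : Disjoint a c) :
    Function.Injective (glue (S := S) a c d h) := by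
  intro p q hpq
  obtain ⟨p1, p2⟩ := p; obtain ⟨q1, q2⟩ := q
  simp only [Prod.mk.injEq]
  constructor
  · funext i
    have := congrFun hpq ⟨i.1, had i.2⟩
    simpa [glue, i.2] using this
  · funext i
    have hia : i.1 ∉ a := Finset.disjoint_right.mp hac i.2
    have := congrFun hpq ⟨i.1, hcd i.2⟩
    simpa [glue, hia] using this

/-- If the atoms `I_∂ f` (indexed by non-constant monotone Boolean
functions) satisfy the PID consistency equations
`I(X^a ; Y) = ∑_{f(a) = 1} I_∂ f` for every `a`, then for disjoint `a, b`, the PID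
conjugation of `I(X^a ; Y | X^b)` coincides with its entropic conjugate:
`∑_{f(a∪b) = 1, f(b) = 0} I_∂ (f†) = I(X^a ; Y | X^{(a∪b)ᶜ})`. -/
theorem pid_conjugation_cmi {Ω S T : Type*} [MeasurableSpace Ω]
    [Fintype S] [MeasurableSpace S] [MeasurableSingletonClass S]
    [Fintype T] [MeasurableSpace T] [MeasurableSingletonClass T]
    {n : ℕ} (μ : Measure Ω) [IsProbabilityMeasure μ]
    (X : Fin n → Ω → S) (hX : ∀ i, Measurable (X i))
    (Y : Ω → T) (hY : Measurable Y)
    (Ipd : (Finset (Fin n) → Bool) → ℝ)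
    (hcons : ∀ a : Finset (Fin n),
      mi μ (restr X a) Y =
        ∑ f ∈ univ.filter (fun f : Finset (Fin n) → Bool =>
            monoBF f ∧ (∃ s t, f s ≠ f t) ∧ f a = true), Ipd f)
    (a b : Finset (Fin n)) (hab : Disjoint a b) :
    (∑ f ∈ univ.filter (fun f : Finset (Fin n) → Bool =>
        monoBF f ∧ (∃ s t, f s ≠ f t) ∧ f (a ∪ b) = true ∧ f b = false), Ipd (conjBF f))
      = cmi μ (restr X a) Y (restr X (a ∪ b)ᶜ) := by
  classical
  set c : Finset (Fin n) := (a ∪ b)ᶜ with hc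
  have hcb : c ⊆ bᶜ := by
    intro i hi
    simp only [hc, Finset.mem_compl, Finset.mem_union] at hi ⊢
    exact fun h => hi (Or.inr h)
  have hacompl : a ⊆ bᶜ := fun i hi =>
    Finset.mem_compl.2 (Finset.disjoint_left.mp hab hi)
  have hac : Disjoint a c := by
    rw [Finset.disjoint_right]
    intro i hi
    simp only [hc, Finset.mem_compl, Finset.mem_union] at hi
    exact fun h => hi (Or.inl h)
  have hfill : ∀ i ∈ bᶜ, i ∉ a → i ∈ c := by
    intro i hi hia
    simp only [hc, Finset.mem_compl, Finset.mem_union]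
    rintro (h | h)
    · exact hia h
    · exact (Finset.mem_compl.1 hi) h
  -- Step 1: reindex the sum via conjugation
  have hreix :
      (∑ f ∈ univ.filter (fun f : Finset (Fin n) → Bool =>
        monoBF f ∧ (∃ s t, f s ≠ f t) ∧ f (a ∪ b) = true ∧ f b = false), Ipd (conjBF f))
      = ∑ g ∈ univ.filter (fun g : Finset (Fin n) → Bool =>
        monoBF g ∧ (∃ s t, g s ≠ g t) ∧ g bᶜ = true ∧ g c = false), Ipd g := by
    refine Finset.sum_nbij' (i := conjBF) (j := conjBF) ?_ ?_ ?_ ?_ ?_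
    · intro f hf
      simp only [Finset.mem_filter, Finset.mem_univ, true_and] at hf ⊢
      obtain ⟨hm, ⟨s, t, hst⟩, hab1, hb0⟩ := hf
      refine ⟨mono_conj hm, ⟨sᶜ, tᶜ, ?_⟩, ?_, ?_⟩
      · simp only [conjBF, compl_compl]
        intro h; exact hst (by revert h; cases f s <;> cases f t <;> simp)
      · simp [conjBF, hb0]
      · simp only [conjBF, hc, compl_compl, hab1, Bool.not_true]
    · intro g hg
      simp only [Finset.mem_filter, Finset.mem_univ, true_and] at hg ⊢
      obtain ⟨hm, ⟨s, t, hst⟩, hb1, hc0⟩ := hg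
      refine ⟨mono_conj hm, ⟨sᶜ, tᶜ, ?_⟩, ?_, ?_⟩
      · simp only [conjBF, compl_compl]
        intro h; exact hst (by revert h; cases g s <;> cases g t <;> simp)
      · show (!(g (a ∪ b)ᶜ)) = true
        rw [← hc, hc0]
        rfl
      · simp [conjBF, hb1]
    · intro f _; exact conj_conj f
    · intro g _; exact conj_conj g
    · intro f _; rfl
  rw [hreix]
  -- Step 2: split the bᶜ consistency sum
  have hmono_cb : ∀ g : Finset (Fin n) → Bool, monoBF g → g c = true → g bᶜ = true := by
    intro g hg h
    have := hg c bᶜ hcb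
    rw [h] at this
    revert this; cases g bᶜ <;> simp
  have hsplit :
      (∑ g ∈ univ.filter (fun g : Finset (Fin n) → Bool =>
        monoBF g ∧ (∃ s t, g s ≠ g t) ∧ g bᶜ = true), Ipd g)
      = (∑ g ∈ univ.filter (fun g : Finset (Fin n) → Bool =>
          monoBF g ∧ (∃ s t, g s ≠ g t) ∧ g bᶜ = true ∧ g c = false), Ipd g)
        + ∑ g ∈ univ.filter (fun g : Finset (Fin n) → Bool =>
          monoBF g ∧ (∃ s t, g s ≠ g t) ∧ g c = true), Ipd g := by
    rw [← Finset.sum_filter_add_sum_filter_not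
      (univ.filter (fun g : Finset (Fin n) → Bool =>
        monoBF g ∧ (∃ s t, g s ≠ g t) ∧ g bᶜ = true)) (fun g => g c = false) Ipd]
    congr 1
    · rw [Finset.filter_filter]
      refine Finset.sum_congr (Finset.filter_congr fun g _ => ?_) fun _ _ => rfl
      tauto
    · rw [Finset.filter_filter]
      refine Finset.sum_congr (Finset.filter_congr fun g _ => ?_) fun _ _ => rfl
      simp only [Bool.not_eq_false]
      constructor
      · rintro ⟨⟨h1, h2, _⟩, h4⟩; exact ⟨h1, h2, h4⟩
      · rintro ⟨h1, h2, h3⟩; exact ⟨⟨h1, h2, hmono_cb g h1 h3⟩, h3⟩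
  have hsum : (∑ g ∈ univ.filter (fun g : Finset (Fin n) → Bool =>
        monoBF g ∧ (∃ s t, g s ≠ g t) ∧ g bᶜ = true ∧ g c = false), Ipd g)
      = mi μ (restr X bᶜ) Y - mi μ (restr X c) Y := by
    rw [hcons bᶜ, hcons c, hsplit]; ring
  rw [hsum]
  -- Step 3: entropy identities
  have hglue : restr X bᶜ = fun ω => glue a c bᶜ hfill (restr X a ω, restr X c ω) := by
    funext ω i
    simp only [glue, restr]
    split <;> rfl
  have H1 : ent μ (restr X bᶜ) = ent μ (fun ω => (restr X a ω, restr X c ω)) := by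
    rw [hglue]
    exact ent_comp_inj μ _ _ (glue_inj a c bᶜ hfill hacompl hcb hac)
  have H2 : ent μ (fun ω => (restr X bᶜ ω, Y ω))
      = ent μ (fun ω => (restr X a ω, Y ω, restr X c ω)) := by
    have he2 : Function.Injective
        (fun q : (a → S) × T × (c → S) =>
          ((glue a c bᶜ hfill (q.1, q.2.2), q.2.1) : (↥(bᶜ) → S) × T)) := by
      intro p q hpq
      simp only [Prod.mk.injEq] at hpq
      have h1 := glue_inj a c bᶜ hfill hacompl hcb hac hpq.1
      simp only [Prod.mk.injEq] at h1
      obtain ⟨p1, p2, p3⟩ := p; obtain ⟨q1, q2, q3⟩ := q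
      simp only [Prod.mk.injEq]
      exact ⟨h1.1, hpq.2, h1.2⟩
    have : (fun ω => (restr X bᶜ ω, Y ω))
        = fun ω => (glue a c bᶜ hfill (restr X a ω, restr X c ω), Y ω) := by
      funext ω; rw [hglue]
    rw [this]
    exact ent_comp_inj μ (fun ω => (restr X a ω, Y ω, restr X c ω))
      (fun q : (a → S) × T × (c → S) =>
        ((glue a c bᶜ hfill (q.1, q.2.2), q.2.1) : (↥(bᶜ) → S) × T)) he2
  have H3 : ent μ (fun ω => (Y ω, restr X c ω))
      = ent μ (fun ω => (restr X c ω, Y ω)) := by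
    exact ent_comp_inj μ (fun ω => (restr X c ω, Y ω)) Prod.swap Prod.swap_injective
  simp only [mi, cmi]
  linarith
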